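/- arXiv:1703.00101 — 3 statements merged into one kernel-verified Lean document; each statement's English description precedes it below -/
import Mathlib

section
/- In the ring of pseudo-differential operators with anti-involution *, let Φ be an invertible operator with Φ* = ∂ Φ^{−1} ∂^{−1}, let Γ be an operator with Γ* = Γ, and set L := Φ ∂ Φ^{−1} and M := Φ Γ Φ^{−1}; then M* = ∂ Φ ∂^{−1} Γ ∂ Φ^{−1} ∂^{−1}, and if moreover ∂^{−1} Γ ∂ = Γ' with Φ Γ' Φ^{−1} = L^{−1} M L, then M* = ∂ L^{−1} M L ∂^{−1}. -/
/-- In a ring of formal pseudo-differential operators with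
anti-involution `*` satisfying `∂* = −∂` and `(AB)* = B*A*`, assume `Φ` is
invertible with `Φ* = ∂ Φ⁻¹ ∂⁻¹`, and `Γ* = Γ`. Set `L = Φ ∂ Φ⁻¹`
(with inverse `L⁻¹ = Φ ∂⁻¹ Φ⁻¹`) and `M = Φ Γ Φ⁻¹`. Then
`M* = ∂ L⁻¹ M L ∂⁻¹` (Lemma on the Orlov–Shulman operator). -/
theorem orlov_shulman_star_identity
    (R : Type*) [Ring R] [StarRing R]
    (d dinv Φ Φinv Γ : R)
    (hd1 : d * dinv = 1) (hd2 : dinv * d = 1)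
    (hΦ1 : Φ * Φinv = 1) (hΦ2 : Φinv * Φ = 1)
    (hstard : star d = -d)
    (hstarΦ : star Φ = d * Φinv * dinv)
    (hstarΓ : star Γ = Γ)
    (Lop Linv Mop : R)
    (hL : Lop = Φ * d * Φinv) (hLinv : Linv = Φ * dinv * Φinv)
    (hM : Mop = Φ * Γ * Φinv) :
    star Mop = d * Linv * Mop * Lop * dinv := by
  have c1 : ∀ x : R, Φinv * (Φ * x) = x := fun x => by rw [← mul_assoc, hΦ2, one_mul]
  have c2 : ∀ x : R, dinv * (d * x) = x := fun x => by rw [← mul_assoc, hd2, one_mul]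
  have c3 : ∀ x : R, Φ * (Φinv * x) = x := fun x => by rw [← mul_assoc, hΦ1, one_mul]
  have c4 : ∀ x : R, d * (dinv * x) = x := fun x => by rw [← mul_assoc, hd1, one_mul]
  have hsΦinv : star Φinv = d * Φ * dinv := by
    have h : star Φ * star Φinv = 1 := by
      rw [← star_mul, hΦ2, star_one]
    calc star Φinv = (d * Φ * dinv * star Φ) * star Φinv := by
          rw [hstarΦ]
          simp [mul_assoc, c1, c2, c3, c4]
      _ = d * Φ * dinv * (star Φ * star Φinv) := by rw [mul_assoc]
      _ = d * Φ * dinv := by rw [h, mul_one]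
  subst hL hLinv hM
  rw [star_mul, star_mul, hsΦinv, hstarΓ, hstarΦ]
  simp [mul_assoc, c1, c2, c3, c4]
end

section
/- Let R be an associative ring with an anti-involution * (so (AB)* = B*A*, (A+B)* = A*+B*) and an invertible element ∂ with ∂* = −∂. Suppose M* = ∂ L^{−1} M L ∂^{−1} and L* = −∂ L ∂^{−1} for invertible L. Then for all natural m, n, the element B_{mn} := M^m L^n − (−1)^n L^{n−1} M^m L satisfies B_{mn}* = −∂ B_{mn} ∂^{−1}. -/
/-- Let `R` be an associative ring with an anti-involution `*`
and an invertible element `∂` with `∂* = −∂`. Suppose `L` is invertible with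
`L* = −∂ L ∂⁻¹` and `M* = ∂ L⁻¹ M L ∂⁻¹`. Then for all natural `m, n` with
`n ≥ 1`, the element `B_{mn} := M^m L^n − (−1)^n L^{n−1} M^m L` satisfies the
B-type anti-symmetry condition `B_{mn}* = −∂ B_{mn} ∂⁻¹`. -/
theorem btype_condition_Bmn
    (R : Type*) [Ring R] [StarRing R]
    (d dinv Lop Linv M : R)
    (hd1 : d * dinv = 1) (hd2 : dinv * d = 1)
    (hL1 : Lop * Linv = 1) (hL2 : Linv * Lop = 1)
    (hstard : star d = -d)
    (hstarL : star Lop = -(d * Lop * dinv))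
    (hstarM : star M = d * Linv * M * Lop * dinv)
    (m n : ℕ) (hn : 1 ≤ n)
    (B : R) (hB : B = M ^ m * Lop ^ n - (-1 : R) ^ n * (Lop ^ (n - 1) * M ^ m * Lop)) :
    star B = -(d * B * dinv) := by
  subst hB
  obtain ⟨k, rfl⟩ : ∃ k, n = k + 1 := ⟨n - 1, (Nat.succ_pred_eq_of_pos hn).symm⟩
  simp only [Nat.add_sub_cancel]
  have hd1' : ∀ x : R, d * (dinv * x) = x := fun x => by rw [← mul_assoc, hd1, one_mul]
  have hd2' : ∀ x : R, dinv * (d * x) = x := fun x => by rw [← mul_assoc, hd2, one_mul]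
  have hL1' : ∀ x : R, Lop * (Linv * x) = x := fun x => by rw [← mul_assoc, hL1, one_mul]
  have hL2' : ∀ x : R, Linv * (Lop * x) = x := fun x => by rw [← mul_assoc, hL2, one_mul]
  have conj_pow : ∀ (a b x : R), a * b = 1 → b * a = 1 → ∀ j : ℕ,
      (a * x * b) ^ j = a * x ^ j * b := by
    intro a b x hab hba j
    induction j with
    | zero => simpa using hab.symm
    | succ i ih =>
      rw [pow_succ, pow_succ, ih]
      calc a * x ^ i * b * (a * x * b) = a * (x ^ i * (b * a) * x) * b := by noncomm_ring
        _ = a * (x ^ i * x) * b := by rw [hba, mul_one]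
  have hM : star (M ^ m) = (d * Linv) * M ^ m * (Lop * dinv) := by
    rw [star_pow, show star M = (d * Linv) * M * (Lop * dinv) by rw [hstarM]; noncomm_ring]
    exact conj_pow _ _ _ (by simp only [mul_assoc, hL2', hd1]) (by simp only [mul_assoc, hd2', hL1]) m
  have hLpow : ∀ j : ℕ, star (Lop ^ j) = (-1 : R) ^ j * (d * Lop ^ j * dinv) := by
    intro j
    rw [star_pow, hstarL, neg_pow, conj_pow d dinv Lop hd1 hd2 j]
  have hpowL : Lop * Lop ^ k = Lop ^ k * Lop := (pow_succ' Lop k).symm.trans (pow_succ Lop k)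
  have hpowL' : ∀ x : R, Lop * (Lop ^ k * x) = Lop ^ k * (Lop * x) := fun x => by
    rw [← mul_assoc, hpowL, mul_assoc]
  rw [star_sub, star_mul, star_mul, star_mul, star_mul, hM, hLpow, hLpow, hstarL, star_pow, star_neg,
    star_one]
  rcases Nat.even_or_odd k with hk | hk
  · rw [hk.neg_one_pow, (Even.add_one hk).neg_one_pow]
    simp only [pow_succ, mul_assoc, neg_mul, mul_neg, neg_neg, one_mul, mul_one, hd1', hd2',
      hL1', hL2', mul_sub, sub_eq_add_neg, neg_add, hpowL, hpowL', mul_add, add_mul]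
    abel
  · rw [hk.neg_one_pow, (Odd.add_one hk).neg_one_pow]
    simp only [pow_succ, mul_assoc, neg_mul, mul_neg, neg_neg, one_mul, mul_one, hd1', hd2',
      hL1', hL2', mul_sub, sub_eq_add_neg, neg_add, hpowL, hpowL', mul_add, add_mul]
    abel
end

section
/- In the quantum torus associative algebra generated by invertible U, V with U V = q V U (where U plays the role of q^L and V of e^M), define E_{n,m} := Vⁿ(Uᵐ − U^{−m}). Then [E_{n,m}, E_{l,k}] = (q^{ml}−q^{nk}) V^{n+l}(U^{m+k} − U^{−(m+k)}) − (q^{ml}−q^{−nk}) V^{n+l}(U^{m−k} − U^{−(m−k)}) + (q^{ml}−q^{nk}+q^{−ml}−q^{−nk}) V^{n+l}(U^{−m−k} − U^{−m+k}). -/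
/-!
Moving `U ^ a` past `V ^ b` costs the central factor `q ^ (a * b)`, so the monomials multiply as
`(V ^ p * U ^ a) * (V ^ r * U ^ b) = q ^ (a * r) • V ^ (p + r) * U ^ (a + b)`. Expanding both
products in the commutator gives eight such monomials, all with `V ^ (n + l)`, and collecting
them by the power of `U` yields the three terms.
-/

theorem zpow_mul_zpow_eq_of_mul_eq_mul_mul {G : Type*} [Group G] {Q u v : G}
    (hQu : Commute Q u) (hQv : Commute Q v) (h : u * v = Q * (v * u)) (a b : ℤ) :
    u ^ a * v ^ b = Q ^ (a * b) * (v ^ b * u ^ a) := by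
  have hv : SemiconjBy u (v ^ b) (Q ^ b * v ^ b) := by
    rw [← hQv.mul_zpow]
    exact SemiconjBy.zpow_right (by rw [SemiconjBy, h, mul_assoc]) b
  have hu : SemiconjBy (v ^ b) (Q ^ b * u) u := by
    rw [SemiconjBy, hv.eq, ← mul_assoc, ((hQv.zpow_left b).zpow_right b).eq]
  calc u ^ a * v ^ b = v ^ b * (Q ^ b * u) ^ a := (hu.zpow_right a).eq.symm
    _ = v ^ b * (Q ^ (a * b) * u ^ a) := by
      rw [(hQu.zpow_left b).mul_zpow, ← zpow_mul, mul_comm b]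
    _ = Q ^ (a * b) * (v ^ b * u ^ a) := by
      rw [← mul_assoc, ← ((hQv.zpow_left _).zpow_right b).eq, mul_assoc]

section QuantumTorus

variable {K : Type*} [CommRing K] (q : Kˣ) {A : Type*} [Ring A] [Algebra K A] {U V : Aˣ}

theorem zpow_mul_zpow_eq_of_mul_eq_smul_mul
    (hUV : (U : A) * (V : A) = (q : K) • ((V : A) * (U : A))) (a b : ℤ) :
    ((U ^ a : Aˣ) : A) * ((V ^ b : Aˣ) : A)
      = ((q ^ (a * b) : Kˣ) : K) • (((V ^ b : Aˣ) : A) * ((U ^ a : Aˣ) : A)) := by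
  set Q : Aˣ := Units.map (algebraMap K A : K →* A) q
  have hQ : ∀ x : Aˣ, Commute Q x := fun x => Units.ext (Algebra.commutes _ _)
  have h : U * V = Q * (V * U) := Units.ext (by simpa [Q, Algebra.smul_def] using hUV)
  have := congrArg Units.val (zpow_mul_zpow_eq_of_mul_eq_mul_mul (hQ U) (hQ V) h a b)
  rw [← map_zpow] at this
  simpa only [Units.val_mul, Units.coe_map, MonoidHom.coe_coe, Algebra.smul_def] using this

theorem monomial_mul_monomial_of_mul_eq_smul_mul
    (hUV : (U : A) * (V : A) = (q : K) • ((V : A) * (U : A))) (p r a b : ℤ) :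
    (((V ^ p : Aˣ) : A) * ((U ^ a : Aˣ) : A)) * (((V ^ r : Aˣ) : A) * ((U ^ b : Aˣ) : A))
      = ((q ^ (a * r) : Kˣ) : K) •
        (((V ^ (p + r) : Aˣ) : A) * ((U ^ (a + b) : Aˣ) : A)) := by
  rw [mul_assoc, ← mul_assoc ((U ^ a : Aˣ) : A), zpow_mul_zpow_eq_of_mul_eq_smul_mul q hUV,
    smul_mul_assoc, mul_smul_comm, zpow_add, zpow_add, Units.val_mul, Units.val_mul]
  noncomm_ring

end QuantumTorus

/-- In the quantum torus associative algebra generated by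
invertible `U, V` with `U V = q V U` (where `U` plays the role of `q^L` and `V`
of `e^M`), the elements `E_{n,m} := Vⁿ(Uᵐ − U^{−m})` satisfy
`[E_{n,m}, E_{l,k}] = (q^{ml}−q^{nk}) V^{n+l}(U^{m+k} − U^{−(m+k)})`
`− (q^{ml}−q^{−nk}) V^{n+l}(U^{m−k} − U^{−(m−k)})`
`+ (q^{ml}−q^{nk}+q^{−ml}−q^{−nk}) V^{n+l}(U^{−m−k} − U^{−m+k})`. -/
theorem quantum_torus_E_commutator
    (K : Type*) [CommRing K] (q : Kˣ)
    (A : Type*) [Ring A] [Algebra K A]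
    (U V : Aˣ)
    (hUV : (U : A) * (V : A) = (q : K) • ((V : A) * (U : A)))
    (E : ℕ → ℕ → A)
    (hE : ∀ n m : ℕ,
      E n m = ((V ^ (n : ℤ) : Aˣ) : A) *
        (((U ^ (m : ℤ) : Aˣ) : A) - ((U ^ (-(m : ℤ)) : Aˣ) : A)))
    (n m l k : ℕ) :
    E n m * E l k - E l k * E n m
      = (((q ^ ((m : ℤ) * l) : Kˣ) : K) - ((q ^ ((n : ℤ) * k) : Kˣ) : K)) •
          (((V ^ ((n : ℤ) + l) : Aˣ) : A) *
            (((U ^ ((m : ℤ) + k) : Aˣ) : A) - ((U ^ (-((m : ℤ) + k)) : Aˣ) : A)))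
        - (((q ^ ((m : ℤ) * l) : Kˣ) : K) - ((q ^ (-((n : ℤ) * k)) : Kˣ) : K)) •
            (((V ^ ((n : ℤ) + l) : Aˣ) : A) *
              (((U ^ ((m : ℤ) - k) : Aˣ) : A) - ((U ^ (-((m : ℤ) - k)) : Aˣ) : A)))
        + (((q ^ ((m : ℤ) * l) : Kˣ) : K) - ((q ^ ((n : ℤ) * k) : Kˣ) : K)
            + ((q ^ (-((m : ℤ) * l)) : Kˣ) : K) - ((q ^ (-((n : ℤ) * k)) : Kˣ) : K)) •
            (((V ^ ((n : ℤ) + l) : Aˣ) : A) *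
              (((U ^ (-(m : ℤ) - k) : Aˣ) : A) - ((U ^ (-(m : ℤ) + k) : Aˣ) : A))) := by
  simp only [hE, mul_sub, sub_mul, monomial_mul_monomial_of_mul_eq_smul_mul q hUV]
  -- `ring_nf` only normalizes the integer exponents, so that equal monomials become syntactically equal
  ring_nf
  module
end
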